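/- Let K̂, P̂ be symmetric positive definite n×n real matrices and suppose ‖P̂^{-1}‖_2 ≤ c and ‖K̂^{-1}‖_2 ≤ c for some c > 0. Then the condition number of P̂^{-1/2} K̂ P̂^{-1/2} satisfies κ(P̂^{-1/2} K̂ P̂^{-1/2}) ≤ (1 + c‖K̂ - P̂‖_F)². -/

import Mathlib

/-!
Write `S = P^{1/2}`, `T = K^{1/2}` and `M = S⁻¹ K S⁻¹`. Since `M` is positive definite, its
condition number is at most `‖M‖ ‖M⁻¹‖`. From `M = 1 + S⁻¹ (K - P) S⁻¹` we get
`‖M‖ ≤ 1 + ‖P⁻¹‖ ‖K - P‖`. For the inverse, `M⁻¹ = S K⁻¹ S = Aᴴ A` with `A = T⁻¹ S`, so the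
C⋆-identity gives `‖M⁻¹‖ = ‖A Aᴴ‖ = ‖T⁻¹ P T⁻¹‖`, and the same estimate with the roles of `K` and
`P` exchanged bounds this by `1 + ‖K⁻¹‖ ‖K - P‖`. Finally the spectral norm is dominated by the
Frobenius norm.
-/

open Matrix

/-- Frobenius norm of a real matrix. -/
noncomputable def frobNorm {n m : ℕ} (A : Matrix (Fin n) (Fin m) ℝ) : ℝ :=
  Real.sqrt (∑ i, ∑ j, (A i j) ^ 2)

/-- Spectral (ℓ²-operator) norm of a real matrix. -/
noncomputable def specNorm {n : ℕ} (M : Matrix (Fin n) (Fin n) ℝ) : ℝ :=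
  ‖LinearMap.toContinuousLinearMap (Matrix.toEuclideanLin M)‖

/-- Condition number of a Hermitian matrix: ratio of largest to smallest eigenvalue. -/
noncomputable def condNumber {n : ℕ} (hn : 0 < n) (M : Matrix (Fin n) (Fin n) ℝ)
    (hM : M.IsHermitian) : ℝ :=
  Finset.univ.sup' (Finset.univ_nonempty_iff.mpr ⟨⟨0, hn⟩⟩) hM.eigenvalues /
    Finset.univ.inf' (Finset.univ_nonempty_iff.mpr ⟨⟨0, hn⟩⟩) hM.eigenvalues

/-- The square root of a positive semidefinite matrix, as `Matrix.PosSemidef.sqrt` was defined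
in the older Mathlib. -/
noncomputable def posSemidefSqrt {n : ℕ} {A : Matrix (Fin n) (Fin n) ℝ} (hA : A.PosSemidef) :
    Matrix (Fin n) (Fin n) ℝ :=
  (hA.1.eigenvectorUnitary : Matrix (Fin n) (Fin n) ℝ) *
    diagonal ((RCLike.ofReal : ℝ → ℝ) ∘ (√·) ∘ hA.1.eigenvalues) *
    (star hA.1.eigenvectorUnitary : Matrix (Fin n) (Fin n) ℝ)

open scoped Matrix.Norms.L2Operator

namespace Matrix

section L2OpNorm

variable {𝕜 m : Type*} [RCLike 𝕜] [Fintype m] [DecidableEq m]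

theorem IsHermitian.l2_opNorm_mul_self {A : Matrix m m 𝕜} (hA : A.IsHermitian) :
    ‖A * A‖ = ‖A‖ * ‖A‖ := by
  rw [← l2_opNorm_conjTranspose_mul_self, hA.eq]

theorem IsHermitian.l2_opNorm_inv_mul_mul_inv_le [Nonempty m] {S : Matrix m m 𝕜}
    (hS : S.IsHermitian) (hSu : IsUnit S) (K : Matrix m m 𝕜) :
    ‖S⁻¹ * K * S⁻¹‖ ≤ 1 + ‖(S * S)⁻¹‖ * ‖K - S * S‖ := by
  have hdet := (isUnit_iff_isUnit_det S).mp hSu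
  have hdecomp : S⁻¹ * K * S⁻¹ = 1 + S⁻¹ * (K - S * S) * S⁻¹ := by
    rw [Matrix.mul_sub, Matrix.sub_mul, ← mul_assoc, nonsing_inv_mul S hdet, one_mul, mul_assoc,
      mul_nonsing_inv S hdet]
    abel
  calc ‖S⁻¹ * K * S⁻¹‖ ≤ ‖(1 : Matrix m m 𝕜)‖ + ‖S⁻¹ * (K - S * S) * S⁻¹‖ :=
        hdecomp ▸ norm_add_le _ _
    _ ≤ 1 + ‖S⁻¹‖ * ‖K - S * S‖ * ‖S⁻¹‖ := by
        rw [norm_one]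
        gcongr
        exact (l2_opNorm_mul _ _).trans (by gcongr; exact l2_opNorm_mul _ _)
    _ = 1 + ‖(S * S)⁻¹‖ * ‖K - S * S‖ := by
        rw [Matrix.mul_inv_rev, hS.inv.l2_opNorm_mul_self]
        ring

theorem IsHermitian.l2_opNorm_inv_inv_mul_mul_inv {S T : Matrix m m 𝕜} (hS : S.IsHermitian)
    (hSu : IsUnit S) (hT : T.IsHermitian) :
    ‖(S⁻¹ * (T * T) * S⁻¹)⁻¹‖ = ‖T⁻¹ * (S * S) * T⁻¹‖ := by
  have h₁ : (S⁻¹ * (T * T) * S⁻¹)⁻¹ = (T⁻¹ * S)ᴴ * (T⁻¹ * S) := by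
    rw [Matrix.mul_inv_rev, Matrix.mul_inv_rev, Matrix.mul_inv_rev,
      nonsing_inv_nonsing_inv _ ((isUnit_iff_isUnit_det S).mp hSu), conjTranspose_mul, hS.eq,
      hT.inv.eq]
    simp only [mul_assoc]
  have h₂ : T⁻¹ * (S * S) * T⁻¹ = (T⁻¹ * S)ᴴᴴ * (T⁻¹ * S)ᴴ := by
    rw [conjTranspose_conjTranspose, conjTranspose_mul, hS.eq, hT.inv.eq]
    simp only [mul_assoc]
  rw [h₁, h₂, l2_opNorm_conjTranspose_mul_self, l2_opNorm_conjTranspose_mul_self,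
    l2_opNorm_conjTranspose]

open scoped ComplexOrder in
theorem PosDef.inv_mul_mul_inv {K S : Matrix m m 𝕜} (hK : K.PosDef) (hS : S.IsHermitian)
    (hSu : IsUnit S) : (S⁻¹ * K * S⁻¹).PosDef := by
  simpa only [hS.inv.eq] using
    hK.conjTranspose_mul_mul_same (mulVec_injective_iff_isUnit.mpr (isUnit_nonsing_inv_iff.mpr hSu))

end L2OpNorm

section Eigenvalues

variable {m : Type*} [Fintype m] [DecidableEq m] [Nonempty m]

theorem IsHermitian.eigenvalues_le_l2_opNorm {M : Matrix m m ℝ} (hM : M.IsHermitian) (i : m) :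
    hM.eigenvalues i ≤ ‖M‖ :=
  (le_abs_self _).trans (spectrum.norm_le_norm_of_mem (hM.eigenvalues_mem_spectrum_real i))

theorem PosDef.inv_l2_opNorm_inv_le_eigenvalues {M : Matrix m m ℝ} (hM : M.PosDef) (i : m) :
    ‖M⁻¹‖⁻¹ ≤ hM.1.eigenvalues i := by
  have hpos := hM.eigenvalues_pos i
  have hinv : (hM.1.eigenvalues i)⁻¹ ∈ spectrum ℝ M⁻¹ := by
    simpa [coe_units_inv] using (spectrum.inv_mem_iff (r := Units.mk0 _ hpos.ne')
      (a := hM.isUnit.unit)).mp (hM.1.eigenvalues_mem_spectrum_real i)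
  exact inv_le_of_inv_le₀ hpos
    ((le_abs_self _).trans (spectrum.norm_le_norm_of_mem hinv))

end Eigenvalues

end Matrix

section

variable {n : ℕ}

theorem condNumber_le_l2_opNorm_mul_l2_opNorm_inv (hn : 0 < n) {M : Matrix (Fin n) (Fin n) ℝ}
    (hM : M.PosDef) : condNumber hn M hM.1 ≤ ‖M‖ * ‖M⁻¹‖ := by
  have : Nonempty (Fin n) := ⟨⟨0, hn⟩⟩
  have hinf : ‖M⁻¹‖⁻¹ ≤ Finset.univ.inf' Finset.univ_nonempty hM.1.eigenvalues :=
    Finset.le_inf' _ _ fun i _ => hM.inv_l2_opNorm_inv_le_eigenvalues i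
  have hsup : Finset.univ.sup' Finset.univ_nonempty hM.1.eigenvalues ≤ ‖M‖ :=
    Finset.sup'_le _ _ fun i _ => hM.1.eigenvalues_le_l2_opNorm i
  have hMinv : 0 < ‖M⁻¹‖ := norm_pos_iff.mpr (isUnit_nonsing_inv_iff.mpr hM.isUnit).ne_zero
  calc condNumber hn M hM.1 ≤ ‖M‖ / ‖M⁻¹‖⁻¹ :=
        div_le_div₀ (norm_nonneg _) hsup (inv_pos.mpr hMinv) hinf
    _ = ‖M‖ * ‖M⁻¹‖ := by rw [div_inv_eq_mul]

theorem l2_opNorm_le_frobNorm {m : ℕ} (A : Matrix (Fin n) (Fin m) ℝ) : ‖A‖ ≤ frobNorm A := by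
  rw [Matrix.l2_opNorm_def]
  refine ContinuousLinearMap.opNorm_le_bound _ (Real.sqrt_nonneg _) fun x => ?_
  rw [EuclideanSpace.norm_eq, EuclideanSpace.norm_eq, frobNorm, ← Real.sqrt_mul (by positivity)]
  apply Real.sqrt_le_sqrt
  calc ∑ i, ‖(A *ᵥ x.ofLp) i‖ ^ 2
      = ∑ i, (∑ j, A i j * x j) ^ 2 := by
        simp [Real.norm_eq_abs, sq_abs, Matrix.mulVec, dotProduct]
    _ ≤ ∑ i, (∑ j, A i j ^ 2) * ∑ j, x j ^ 2 :=
        Finset.sum_le_sum fun i _ => Finset.sum_mul_sq_le_sq_mul_sq _ _ _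
    _ = (∑ i, ∑ j, A i j ^ 2) * ∑ j, ‖x j‖ ^ 2 := by
        simp only [Real.norm_eq_abs, sq_abs, Finset.sum_mul]

theorem posSemidefSqrt_isHermitian {A : Matrix (Fin n) (Fin n) ℝ} (hA : A.PosSemidef) :
    (posSemidefSqrt hA).IsHermitian := by
  simpa [posSemidefSqrt, star_eq_conjTranspose] using
    isHermitian_mul_mul_conjTranspose (hA.1.eigenvectorUnitary : Matrix (Fin n) (Fin n) ℝ)
      (isHermitian_diagonal ((RCLike.ofReal : ℝ → ℝ) ∘ (√·) ∘ hA.1.eigenvalues))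

theorem posSemidefSqrt_mul_self {A : Matrix (Fin n) (Fin n) ℝ} (hA : A.PosSemidef) :
    posSemidefSqrt hA * posSemidefSqrt hA = A := by
  have hU := Unitary.coe_star_mul_self hA.1.eigenvectorUnitary
  have hD : diagonal ((RCLike.ofReal : ℝ → ℝ) ∘ (√·) ∘ hA.1.eigenvalues) *
      diagonal ((RCLike.ofReal : ℝ → ℝ) ∘ (√·) ∘ hA.1.eigenvalues) =
      diagonal ((RCLike.ofReal : ℝ → ℝ) ∘ hA.1.eigenvalues) := by
    rw [Matrix.diagonal_mul_diagonal]
    congr 1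
    funext i
    simp [Real.mul_self_sqrt (hA.eigenvalues_nonneg i)]
  unfold posSemidefSqrt
  conv_rhs => rw [hA.1.spectral_theorem, Unitary.conjStarAlgAut_apply]
  rw [← hD]
  simp only [mul_assoc]
  rw [← mul_assoc _ (hA.1.eigenvectorUnitary : Matrix (Fin n) (Fin n) ℝ), hU, one_mul]

theorem isUnit_posSemidefSqrt {A : Matrix (Fin n) (Fin n) ℝ} (hA : A.PosDef) :
    IsUnit (posSemidefSqrt hA.posSemidef) :=
  isUnit_of_mul_isUnit_left ((posSemidefSqrt_mul_self hA.posSemidef).symm ▸ hA.isUnit)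

end

theorem stmt_9_general {n : ℕ} (hn : 0 < n) (K P : Matrix (Fin n) (Fin n) ℝ)
    (hK : K.PosDef) (hP : P.PosDef) (c : ℝ)
    (hPinv : specNorm P⁻¹ ≤ c) (hKinv : specNorm K⁻¹ ≤ c)
    (hM : ((posSemidefSqrt hP.posSemidef)⁻¹ * K * (posSemidefSqrt hP.posSemidef)⁻¹).IsHermitian) :
    condNumber hn ((posSemidefSqrt hP.posSemidef)⁻¹ * K * (posSemidefSqrt hP.posSemidef)⁻¹) hM ≤
      (1 + c * frobNorm (K - P)) ^ 2 := by
  have : Nonempty (Fin n) := ⟨⟨0, hn⟩⟩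
  set S := posSemidefSqrt hP.posSemidef
  set T := posSemidefSqrt hK.posSemidef
  have hS : S.IsHermitian := posSemidefSqrt_isHermitian hP.posSemidef
  have hT : T.IsHermitian := posSemidefSqrt_isHermitian hK.posSemidef
  have hSS : S * S = P := posSemidefSqrt_mul_self hP.posSemidef
  have hTT : T * T = K := posSemidefSqrt_mul_self hK.posSemidef
  have hSu : IsUnit S := isUnit_posSemidefSqrt hP
  have hTu : IsUnit T := isUnit_posSemidefSqrt hK
  have hbound : ∀ A : Matrix (Fin n) (Fin n) ℝ, ‖A‖ ≤ c →
      1 + ‖A‖ * ‖K - P‖ ≤ 1 + c * frobNorm (K - P) := fun A hA => by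
    gcongr
    · exact (norm_nonneg _).trans hA
    · exact l2_opNorm_le_frobNorm _
  have hupper : ‖S⁻¹ * K * S⁻¹‖ ≤ 1 + c * frobNorm (K - P) := by
    have h := hS.l2_opNorm_inv_mul_mul_inv_le hSu K
    rw [hSS] at h
    exact h.trans (hbound _ hPinv)
  have hlower : ‖(S⁻¹ * K * S⁻¹)⁻¹‖ ≤ 1 + c * frobNorm (K - P) := by
    have h := hT.l2_opNorm_inv_mul_mul_inv_le hTu (S * S)
    rw [← hS.l2_opNorm_inv_inv_mul_mul_inv hSu hT, hTT, hSS, norm_sub_rev] at h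
    exact h.trans (hbound _ hKinv)
  calc condNumber hn (S⁻¹ * K * S⁻¹) hM ≤ ‖S⁻¹ * K * S⁻¹‖ * ‖(S⁻¹ * K * S⁻¹)⁻¹‖ :=
        condNumber_le_l2_opNorm_mul_l2_opNorm_inv hn (hK.inv_mul_mul_inv hS hSu)
    _ ≤ (1 + c * frobNorm (K - P)) ^ 2 := by
        rw [sq]
        exact mul_le_mul hupper hlower (norm_nonneg _) ((norm_nonneg _).trans hupper)

theorem stmt_9 {n : ℕ} (hn : 0 < n) (K P : Matrix (Fin n) (Fin n) ℝ)
    (hK : K.PosDef) (hP : P.PosDef) (c : ℝ) (hc : 0 < c)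
    (hPinv : specNorm P⁻¹ ≤ c) (hKinv : specNorm K⁻¹ ≤ c)
    (hM : ((posSemidefSqrt hP.posSemidef)⁻¹ * K * (posSemidefSqrt hP.posSemidef)⁻¹).IsHermitian) :
    condNumber hn ((posSemidefSqrt hP.posSemidef)⁻¹ * K * (posSemidefSqrt hP.posSemidef)⁻¹) hM ≤
      (1 + c * frobNorm (K - P)) ^ 2 :=
  stmt_9_general hn K P hK hP c hPinv hKinv hM
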